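/- Let α ∈ (1,2], let f belong to Co(α) with Taylor coefficients a₂, a₃, and let λ be a real number with λ ≥ 2(α+2)/(3(α+1)). Then |a₃ − λa₂²| ≤ λα² − (2α²+1)/3. -/

import Mathlib

/-!
`Pfun α f` is a Carathéodory function: holomorphic on the disk, equal to `1` at `0`, with
positive real part. Its Cayley transform `w = (P - 1) / (P + 1)` is a Schwarz function, so
`w z = z * φ z` with `‖φ‖ ≤ 1`, and the Schwarz–Pick bound `‖φ' 0‖ ≤ 1 - ‖φ 0‖ ^ 2` yields
`‖c₁‖ ≤ 2` and `‖c₂ - c₁ ^ 2‖ ≤ 4 - ‖c₁‖ ^ 2` for `c_k = P⁽ᵏ⁾(0)`. Expressing `f''(0)` and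
`f'''(0)` through `c₁, c₂` turns `a₃ - λ a₂ ^ 2` into `-A + B c₁ - D c₁ ^ 2 - E (c₂ - c₁ ^ 2)`
with real coefficients that are all nonnegative exactly when `λ ≥ 2(α + 2) / (3(α + 1))`.
The triangle inequality then bounds it by a function of `‖c₁‖` increasing on `[0, 2]`,
whose value at `2` is `λ α ^ 2 - (2 α ^ 2 + 1) / 3`.
-/

open Complex Metric

noncomputable section

/-- The open unit disk in ℂ. -/
def unitDisk : Set ℂ := ball 0 1

/-- φ is a (normalized) starlike univalent function on the unit disk. -/
def IsStarlike (φ : ℂ → ℂ) : Prop :=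
  DifferentiableOn ℂ φ unitDisk ∧ φ 0 = 0 ∧ deriv φ 0 = 1 ∧
    (∀ z ∈ unitDisk, z ≠ 0 → φ z ≠ 0) ∧
    ∀ z ∈ unitDisk, 0 < (z * deriv φ z / φ z).re

/-- The function P_f from the analytic characterization of Co(α). -/
def Pfun (α : ℝ) (f : ℂ → ℂ) (z : ℂ) : ℂ :=
  (2 / ((α : ℂ) - 1)) *
    (((α : ℂ) + 1) / 2 * ((1 + z) / (1 - z)) - 1 - z * deriv (deriv f) z / deriv f z)

/-- f belongs to the class Co(α) of concave univalent functions. -/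
def IsConcaveUnivalent (α : ℝ) (f : ℂ → ℂ) : Prop :=
  DifferentiableOn ℂ f unitDisk ∧ f 0 = 0 ∧ deriv f 0 = 1 ∧
    (∀ z ∈ unitDisk, deriv f z ≠ 0) ∧
    ∀ z ∈ unitDisk, 0 < (Pfun α f z).re

open Set Filter Topology
open scoped ComplexConjugate

theorem iteratedDeriv_succ_zero_of_eventuallyEq_const_add_mul {𝕜 : Type*}
    [NontriviallyNormedField 𝕜] {P H : 𝕜 → 𝕜} {c : 𝕜} {n : ℕ}
    (hH : ContDiffAt 𝕜 (n + 1) H 0) (hP : P =ᶠ[𝓝 0] fun z => c + z * H z) :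
    iteratedDeriv (n + 1) P 0 = (n + 1) * iteratedDeriv n H 0 := by
  rw [hP.iteratedDeriv_eq, iteratedDeriv_const_add n.add_one_pos,
    iteratedDeriv_fun_mul (n := n + 1) contDiffAt_id (by exact_mod_cast hH)]
  simp [iteratedDeriv_fun_id_zero]

theorem add_one_ne_zero_of_re_pos {p : ℂ} (hp : 0 < p.re) : p + 1 ≠ 0 :=
  ne_zero_of_re_pos (by rw [add_re, one_re]; linarith)

theorem norm_sub_one_div_add_one_lt_one {p : ℂ} (hp : 0 < p.re) : ‖(p - 1) / (p + 1)‖ < 1 := by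
  rw [norm_div, div_lt_one (norm_pos_iff.mpr (add_one_ne_zero_of_re_pos hp)), ← sq_lt_sq₀ (norm_nonneg _) (norm_nonneg _),
    ← normSq_eq_norm_sq, ← normSq_eq_norm_sq]
  simp only [normSq_apply, sub_re, sub_im, add_re, add_im, one_re, one_im]
  nlinarith

theorem normSq_one_sub_conj_mul_sub_normSq_sub (a u : ℂ) :
    normSq (1 - conj a * u) - normSq (u - a) = (1 - normSq a) * (1 - normSq u) := by
  simp only [normSq_apply, sub_re, sub_im, mul_re, mul_im, conj_re, conj_im, one_re, one_im]
  ring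

theorem one_sub_conj_mul_ne_zero {a u : ℂ} (ha : ‖a‖ < 1) (hu : ‖u‖ < 1) :
    1 - conj a * u ≠ 0 := by
  rw [sub_ne_zero]
  refine fun h => (norm_one (α := ℂ)).not_lt ?_
  rw [h, norm_mul, norm_conj]
  nlinarith [norm_nonneg a, norm_nonneg u]

theorem norm_sub_div_one_sub_conj_mul_lt_one {a u : ℂ} (ha : ‖a‖ < 1) (hu : ‖u‖ < 1) :
    ‖(u - a) / (1 - conj a * u)‖ < 1 := by
  rw [norm_div, div_lt_one (norm_pos_iff.mpr (one_sub_conj_mul_ne_zero ha hu)),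
    ← sq_lt_sq₀ (norm_nonneg _) (norm_nonneg _), ← normSq_eq_norm_sq, ← normSq_eq_norm_sq]
  have ha' : normSq a < 1 := by rw [normSq_eq_norm_sq]; nlinarith [norm_nonneg a]
  have hu' : normSq u < 1 := by rw [normSq_eq_norm_sq]; nlinarith [norm_nonneg u]
  nlinarith [normSq_one_sub_conj_mul_sub_normSq_sub a u, mul_pos (sub_pos.2 ha') (sub_pos.2 hu')]

theorem norm_deriv_le_one_sub_sq_of_mapsTo_ball {h : ℂ → ℂ}
    (hd : DifferentiableOn ℂ h (ball 0 1)) (hmaps : MapsTo h (ball 0 1) (ball 0 1)) :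
    ‖deriv h 0‖ ≤ 1 - ‖h 0‖ ^ 2 := by
  have h0 : (0 : ℂ) ∈ ball (0 : ℂ) 1 := mem_ball_self one_pos
  set a := h 0
  have ha : ‖a‖ < 1 := mem_ball_zero_iff.mp (hmaps h0)
  have hden : ∀ z ∈ ball (0 : ℂ) 1, 1 - conj a * h z ≠ 0 := fun z hz =>
    one_sub_conj_mul_ne_zero ha (mem_ball_zero_iff.mp (hmaps hz))
  set g : ℂ → ℂ := fun z => (h z - a) / (1 - conj a * h z)
  have hgd : DifferentiableOn ℂ g (ball 0 1) :=
    (hd.sub_const a).div ((differentiableOn_const 1).sub (hd.const_mul _)) hden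
  have hg_maps : MapsTo g (ball 0 1) (closedBall (g 0) 1) := fun z hz => by
    simpa [g, a] using (norm_sub_div_one_sub_conj_mul_lt_one ha
      (mem_ball_zero_iff.mp (hmaps hz))).le
  have hnormSq : 1 - conj a * a = ((1 - ‖a‖ ^ 2 : ℝ) : ℂ) := by
    rw [mul_comm, mul_conj, normSq_eq_norm_sq]; push_cast; ring
  have hpos : 0 < 1 - ‖a‖ ^ 2 := by nlinarith [norm_nonneg a]
  have hg' : HasDerivAt g (deriv h 0 / (1 - conj a * a)) 0 := by
    have hh := (hd.differentiableAt (isOpen_ball.mem_nhds h0)).hasDerivAt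
    refine ((hh.sub_const a).div ((hh.const_mul (conj a)).const_sub 1) (hden 0 h0)).congr_deriv ?_
    rw [sub_self, zero_mul, sub_zero, sq, ← div_div, mul_div_cancel_right₀ _ (hden 0 h0)]
  have hschwarz := norm_deriv_le_one_of_mapsTo_ball hgd hg_maps one_pos
  rwa [hg'.deriv, hnormSq, norm_div, norm_real, Real.norm_of_nonneg hpos.le,
    div_le_one hpos] at hschwarz

theorem norm_deriv_le_one_sub_sq_of_mapsTo_closedBall {h : ℂ → ℂ}
    (hd : DifferentiableOn ℂ h (ball 0 1)) (hmaps : MapsTo h (ball 0 1) (closedBall 0 1)) :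
    ‖deriv h 0‖ ≤ 1 - ‖h 0‖ ^ 2 := by
  by_cases hsup : ∃ z ∈ ball (0 : ℂ) 1, ‖h z‖ = 1
  · obtain ⟨z, hz, hz1⟩ := hsup
    have hmax : IsMaxOn (norm ∘ h) (ball 0 1) z := fun y hy => by
      simpa [hz1] using hmaps hy
    have hconst : EqOn h (fun _ => h z) (ball 0 1) := fun y hy =>
      eqOn_of_isPreconnected_of_isMaxOn_norm (convex_ball (0 : ℂ) 1).isPreconnected
        isOpen_ball hd hz hmax hy
    have h0 : (0 : ℂ) ∈ ball (0 : ℂ) 1 := mem_ball_self one_pos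
    rw [(hconst.eventuallyEq_of_mem (isOpen_ball.mem_nhds h0)).deriv_eq, hconst h0, hz1]
    simp
  · push Not at hsup
    refine norm_deriv_le_one_sub_sq_of_mapsTo_ball hd fun z hz => ?_
    exact mem_ball_zero_iff.mpr ((mem_closedBall_zero_iff.mp (hmaps hz)).lt_of_ne (hsup z hz))

theorem exists_eqOn_one_add_mul_of_re_pos {P : ℂ → ℂ} (hP : DifferentiableOn ℂ P (ball 0 1))
    (h0 : P 0 = 1) (hre : ∀ z ∈ ball (0 : ℂ) 1, 0 < (P z).re) :
    ∃ φ : ℂ → ℂ, DifferentiableOn ℂ φ (ball 0 1) ∧ MapsTo φ (ball 0 1) (closedBall 0 1) ∧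
      EqOn P (fun z => 1 + z * (φ z * (P z + 1))) (ball 0 1) := by
  have hne : ∀ z ∈ ball (0 : ℂ) 1, P z + 1 ≠ 0 := fun z hz => add_one_ne_zero_of_re_pos (hre z hz)
  set w : ℂ → ℂ := fun z => (P z - 1) / (P z + 1)
  have hwd : DifferentiableOn ℂ w (ball 0 1) := (hP.sub_const 1).div (hP.add_const 1) hne
  have hw0 : w 0 = 0 := by simp [w, h0]
  have hw_maps : MapsTo w (ball 0 1) (closedBall (w 0) 1) := fun z hz => by
    rw [hw0, mem_closedBall_zero_iff]
    exact (norm_sub_one_div_add_one_lt_one (hre z hz)).le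
  have hball : ball (0 : ℂ) 1 ∈ 𝓝 0 := isOpen_ball.mem_nhds (mem_ball_self one_pos)
  refine ⟨dslope w 0, (differentiableOn_dslope hball).2 hwd, fun z hz => ?_, fun z hz => ?_⟩
  · simpa using norm_dslope_le_div_of_mapsTo_ball hwd hw_maps hz
  · have hw : z * dslope w 0 z = w z := by simpa [hw0] using sub_smul_dslope w 0 z
    show P z = 1 + z * (dslope w 0 z * (P z + 1))
    rw [← mul_assoc, hw, div_mul_cancel₀ _ (hne z hz)]
    ring

theorem norm_iteratedDeriv_le_of_re_pos {P : ℂ → ℂ} (hP : DifferentiableOn ℂ P (ball 0 1))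
    (h0 : P 0 = 1) (hre : ∀ z ∈ ball (0 : ℂ) 1, 0 < (P z).re) :
    ‖iteratedDeriv 1 P 0‖ ≤ 2 ∧
      ‖iteratedDeriv 2 P 0 - iteratedDeriv 1 P 0 ^ 2‖ ≤ 4 - ‖iteratedDeriv 1 P 0‖ ^ 2 := by
  obtain ⟨φ, hφd, hφ_maps, hPφ⟩ := exists_eqOn_one_add_mul_of_re_pos hP h0 hre
  have hball : ball (0 : ℂ) 1 ∈ 𝓝 0 := isOpen_ball.mem_nhds (mem_ball_self one_pos)
  have hφ : AnalyticAt ℂ φ 0 := hφd.analyticAt hball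
  have hPa : AnalyticAt ℂ P 0 := hP.analyticAt hball
  have hH : AnalyticAt ℂ (fun z => φ z * (P z + 1)) 0 := hφ.mul (hPa.add analyticAt_const)
  have hev := hPφ.eventuallyEq_of_mem hball
  have h1 : iteratedDeriv 1 P 0 = 2 * φ 0 := by
    rw [iteratedDeriv_succ_zero_of_eventuallyEq_const_add_mul (n := 0) hH.contDiffAt hev]
    simp [h0]
    ring
  have h2 : iteratedDeriv 2 P 0 = 4 * deriv φ 0 + 2 * φ 0 * iteratedDeriv 1 P 0 := by
    rw [iteratedDeriv_succ_zero_of_eventuallyEq_const_add_mul (n := 1) hH.contDiffAt hev,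
      iteratedDeriv_one, deriv_fun_mul hφ.differentiableAt (hPa.differentiableAt.add_const 1),
      deriv_add_const, h0, iteratedDeriv_one]
    push_cast
    ring
  have hφ0 : ‖φ 0‖ ≤ 1 := by simpa using hφ_maps (mem_ball_self one_pos)
  have hpick := norm_deriv_le_one_sub_sq_of_mapsTo_closedBall hφd hφ_maps
  have hdiff : iteratedDeriv 2 P 0 - iteratedDeriv 1 P 0 ^ 2 = 4 * deriv φ 0 := by
    rw [h2, h1]; ring
  rw [hdiff, h1]
  simp only [norm_mul, RCLike.norm_ofNat]
  constructor <;> nlinarith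

theorem ne_one_of_mem_unitDisk {z : ℂ} (hz : z ∈ unitDisk) : z ≠ 1 := by
  rintro rfl
  simp [unitDisk] at hz

def pfunSlope (α : ℝ) (f : ℂ → ℂ) (z : ℂ) : ℂ :=
  2 / ((α : ℂ) - 1) * (((α : ℂ) + 1) / (1 - z) - deriv (deriv f) z / deriv f z)

theorem Pfun_eq_one_add_mul_pfunSlope {α : ℝ} (hα : α ≠ 1) (f : ℂ → ℂ) {z : ℂ} (hz : z ≠ 1) :
    Pfun α f z = 1 + z * pfunSlope α f z := by
  have hα' : (α : ℂ) - 1 ≠ 0 := sub_ne_zero.2 (by exact_mod_cast hα)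
  have hz' : 1 - z ≠ 0 := sub_ne_zero.2 hz.symm
  simp only [Pfun, pfunSlope]
  field_simp
  ring

theorem differentiableOn_pfunSlope (α : ℝ) {f : ℂ → ℂ} (hf : DifferentiableOn ℂ f unitDisk)
    (hf' : ∀ z ∈ unitDisk, deriv f z ≠ 0) : DifferentiableOn ℂ (pfunSlope α f) unitDisk := by
  have hf'' := (hf.analyticOnNhd isOpen_ball).deriv
  refine (((differentiableOn_const _).div ((differentiableOn_const 1).sub differentiableOn_id)
    fun z hz => ?_).sub (hf''.deriv.differentiableOn.div hf''.differentiableOn hf')).const_mul _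
  exact sub_ne_zero.2 (ne_one_of_mem_unitDisk hz).symm

theorem pfunSlope_zero (α : ℝ) {f : ℂ → ℂ} (hf1 : deriv f 0 = 1) :
    pfunSlope α f 0 = 2 / ((α : ℂ) - 1) * ((α + 1) - iteratedDeriv 2 f 0) := by
  simp [pfunSlope, hf1, iteratedDeriv_succ]

theorem deriv_pfunSlope_zero (α : ℝ) {f : ℂ → ℂ} (hf : AnalyticAt ℂ f 0) (hf1 : deriv f 0 = 1) :
    deriv (pfunSlope α f) 0 =
      2 / ((α : ℂ) - 1) * ((α + 1) - (iteratedDeriv 3 f 0 - iteratedDeriv 2 f 0 ^ 2)) := by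
  have hg : HasDerivAt (deriv f) (deriv (deriv f) 0) 0 := hf.deriv.differentiableAt.hasDerivAt
  have hu : HasDerivAt (deriv (deriv f)) (deriv (deriv (deriv f)) 0) 0 :=
    hf.deriv.deriv.differentiableAt.hasDerivAt
  have hm : HasDerivAt (fun z : ℂ => ((α : ℂ) + 1) / (1 - z)) (α + 1) 0 := by
    simpa using (hasDerivAt_const (0 : ℂ) ((α : ℂ) + 1)).fun_div
      ((hasDerivAt_id' (0 : ℂ)).const_sub 1) (by norm_num)
  have h : HasDerivAt (pfunSlope α f) (2 / ((α : ℂ) - 1) * ((α + 1) -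
      (deriv (deriv (deriv f)) 0 * deriv f 0 - deriv (deriv f) 0 * deriv (deriv f) 0) /
        deriv f 0 ^ 2)) 0 :=
    (hm.sub (hu.div hg (by rw [hf1]; exact one_ne_zero))).const_mul _
  rw [h.deriv]
  simp [hf1, iteratedDeriv_succ, sq]

theorem norm_coeff_sub_mul_sq_le {α lam : ℝ} {c₁ c₂ d₂ d₃ : ℂ} (hα : 1 < α)
    (hlam : 2 * (α + 2) / (3 * (α + 1)) ≤ lam) (hc₁ : ‖c₁‖ ≤ 2)
    (hc₂ : ‖c₂ - c₁ ^ 2‖ ≤ 4 - ‖c₁‖ ^ 2) (hd₂ : c₁ = 2 / ((α : ℂ) - 1) * ((α + 1) - d₂))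
    (hd₃ : c₂ = 4 / ((α : ℂ) - 1) * ((α + 1) - d₃ + d₂ ^ 2)) :
    ‖d₃ / 6 - (lam : ℂ) * (d₂ / 2) ^ 2‖ ≤ lam * α ^ 2 - (2 * α ^ 2 + 1) / 3 := by
  have hα' : (α : ℂ) - 1 ≠ 0 := sub_ne_zero.2 (by exact_mod_cast hα.ne')
  have e₂ : d₂ = (α + 1) - (α - 1) * c₁ / 2 := by rw [hd₂]; field_simp; ring
  have e₃ : d₃ = (α + 1) + d₂ ^ 2 - (α - 1) * c₂ / 4 := by rw [hd₃]; field_simp; ring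
  obtain ⟨μ, rfl⟩ : ∃ μ, lam = μ + 2 / 3 := ⟨lam - 2 / 3, by ring⟩
  rw [div_le_iff₀ (by linarith)] at hlam
  have hμ : 0 ≤ μ := by nlinarith
  have hA : 0 ≤ μ * (α + 1) ^ 2 / 4 - (α + 1) / 6 := by nlinarith
  have hB : 0 ≤ μ * (α + 1) * (α - 1) / 4 := by
    have := mul_nonneg (mul_nonneg hμ (by linarith : 0 ≤ α + 1)) (by linarith : 0 ≤ α - 1)
    linarith
  have hD : 0 ≤ μ * (α - 1) ^ 2 / 16 + (α - 1) / 24 := by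
    have := mul_nonneg hμ (sq_nonneg (α - 1))
    linarith
  have hE : 0 ≤ (α - 1) / 24 := by linarith
  have key : d₃ / 6 - ((μ + 2 / 3 : ℝ) : ℂ) * (d₂ / 2) ^ 2 =
      -((μ * (α + 1) ^ 2 / 4 - (α + 1) / 6 : ℝ) : ℂ) + (μ * (α + 1) * (α - 1) / 4 : ℝ) * c₁ +
        -((μ * (α - 1) ^ 2 / 16 + (α - 1) / 24 : ℝ) * c₁ ^ 2) +
        -(((α - 1) / 24 : ℝ) * (c₂ - c₁ ^ 2)) := by
    rw [e₃, e₂]; push_cast; ring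
  rw [key]
  refine norm_add₄_le.trans ?_
  simp only [norm_neg, norm_mul, norm_pow, norm_real, Real.norm_of_nonneg, hA, hB, hD, hE]
  have := mul_le_mul_of_nonneg_left hc₂ hE
  have ht : 0 ≤ ‖c₁‖ := norm_nonneg c₁
  -- with `t = ‖c₁‖`, the slack is `μ (α + 1) (α - 1) (2 - t) / 4 + μ (α - 1) ^ 2 (4 - t ^ 2) / 16`
  nlinarith [mul_nonneg hB (sub_nonneg.2 hc₁), mul_nonneg (mul_nonneg hμ (sq_nonneg (α - 1)))
    (mul_nonneg (sub_nonneg.2 hc₁) (by linarith : 0 ≤ 2 + ‖c₁‖))]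

theorem stmt5 (α : ℝ) (hα : 1 < α ∧ α ≤ 2) (f : ℂ → ℂ)
    (hf : IsConcaveUnivalent α f) (lam : ℝ)
    (hlam : 2 * (α + 2) / (3 * (α + 1)) ≤ lam) :
    ‖iteratedDeriv 3 f 0 / 6 - (lam : ℂ) * (iteratedDeriv 2 f 0 / 2) ^ 2‖
      ≤ lam * α ^ 2 - (2 * α ^ 2 + 1) / 3 := by
  obtain ⟨hfd, -, hf1, hf', hre⟩ := hf
  have hball : unitDisk ∈ 𝓝 (0 : ℂ) := isOpen_ball.mem_nhds (mem_ball_self one_pos)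
  have hslope := differentiableOn_pfunSlope α hfd hf'
  have hP : EqOn (Pfun α f) (fun z => 1 + z * pfunSlope α f z) unitDisk := fun z hz =>
    Pfun_eq_one_add_mul_pfunSlope hα.1.ne' f (ne_one_of_mem_unitDisk hz)
  obtain ⟨hc₁, hc₂⟩ := norm_iteratedDeriv_le_of_re_pos
    (((differentiableOn_const 1).add (differentiableOn_id.mul hslope)).congr hP)
    (by simpa using hP (mem_of_mem_nhds hball)) hre
  have hH : AnalyticAt ℂ (pfunSlope α f) 0 := hslope.analyticAt hball
  have hev := hP.eventuallyEq_of_mem hball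
  refine norm_coeff_sub_mul_sq_le hα.1 hlam hc₁ hc₂ ?_ ?_
  · rw [iteratedDeriv_succ_zero_of_eventuallyEq_const_add_mul (n := 0) hH.contDiffAt hev]
    simpa using pfunSlope_zero α hf1
  · rw [iteratedDeriv_succ_zero_of_eventuallyEq_const_add_mul (n := 1) hH.contDiffAt hev,
      iteratedDeriv_one, deriv_pfunSlope_zero α (hfd.analyticAt hball) hf1]
    push_cast
    ring
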